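/- Lemma 3.2: Let p : ℤ → ℝ with p_k ≥ 0 and Σ_{k∈ℤ} p_k = 1, and let φ(θ) = Σ_{k∈ℤ} p_k e^{ikθ} for θ ∈ ℝ. Suppose that for every integer n ≥ 1 there exists q^{(n)} : ℤ → ℝ with Σ_{k∈ℤ} q^{(n)}_k = 1 and Σ_{k∈ℤ} |q^{(n)}_k| < ∞ such that (Σ_{k∈ℤ} q^{(n)}_k e^{ikθ})^n = φ(θ) for all θ ∈ ℝ, and suppose sup_n Σ_k |q^{(n)}_k| < ∞ and lim_{M→∞} sup_n Σ_{|k|>M} |q^{(n)}_k| = 0. Then φ(θ) ≠ 0 for all θ ∈ ℝ. -/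

import Mathlib

/-!
The zero set of `φ` is closed. It is also open: if `φ(θ₁) = 0` then every root
`g_n = Σ q^{(n)}_k e^{ikθ}` vanishes at `θ₁`, and bounded variation together with uniform
tightness makes the family `(g_n)` equicontinuous, so near `θ₁` all `|g_n| ≤ 1/2` and
`|φ| = |g_n|^{n+1} ≤ 2^{-(n+1)}` for every `n`. Since `ℝ` is connected and `φ(0) = 1`,
the zero set is empty.
-/

open Complex Filter Topology

noncomputable def intCharFun (a : ℤ → ℝ) (θ : ℝ) : ℂ :=
  ∑' k : ℤ, (a k : ℂ) * exp (I * (k : ℂ) * (θ : ℂ))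

noncomputable def tailMass (a : ℤ → ℝ) (M : ℕ) : ℝ :=
  ∑' k : ℤ, if (M : ℤ) < |k| then |a k| else 0

lemma I_mul_intCast_mul_ofReal (k : ℤ) (θ : ℝ) :
    I * (k : ℂ) * (θ : ℂ) = I * ((k * θ : ℝ) : ℂ) := by
  push_cast; ring

lemma norm_exp_I_mul_intCast_mul (k : ℤ) (θ : ℝ) : ‖exp (I * (k : ℂ) * (θ : ℂ))‖ = 1 := by
  rw [I_mul_intCast_mul_ofReal, mul_comm]
  exact norm_exp_ofReal_mul_I _

lemma norm_exp_I_mul_intCast_mul_sub_le_two (k : ℤ) (θ θ' : ℝ) :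
    ‖exp (I * (k : ℂ) * (θ : ℂ)) - exp (I * (k : ℂ) * (θ' : ℂ))‖ ≤ 2 := by
  refine (norm_sub_le _ _).trans ?_
  rw [norm_exp_I_mul_intCast_mul, norm_exp_I_mul_intCast_mul]
  norm_num

lemma norm_exp_I_mul_intCast_mul_sub_le (k : ℤ) (θ θ' : ℝ) :
    ‖exp (I * (k : ℂ) * (θ : ℂ)) - exp (I * (k : ℂ) * (θ' : ℂ))‖ ≤ |(k : ℝ)| * |θ - θ'| := by
  have hfactor : exp (I * (k : ℂ) * (θ : ℂ)) - exp (I * (k : ℂ) * (θ' : ℂ))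
      = exp (I * (k : ℂ) * (θ' : ℂ)) * (exp (I * ((k * (θ - θ') : ℝ) : ℂ)) - 1) := by
    rw [mul_sub, mul_one, ← exp_add]
    push_cast
    ring_nf
  rw [hfactor, norm_mul, norm_exp_I_mul_intCast_mul, one_mul, ← abs_mul]
  exact Real.norm_exp_I_mul_ofReal_sub_one_le

section IntCharFun

variable {a : ℤ → ℝ}

lemma intCharFun_zero (a : ℤ → ℝ) : intCharFun a 0 = ((∑' k : ℤ, a k : ℝ) : ℂ) := by
  simp [intCharFun, ofReal_tsum]

lemma summable_tail (ha : Summable fun k => |a k|) (M : ℕ) :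
    Summable fun k : ℤ => if (M : ℤ) < |k| then |a k| else 0 :=
  ha.of_nonneg_of_le (fun k => by split_ifs <;> simp) (fun k => by split_ifs <;> simp)

lemma tailMass_le (ha : Summable fun k => |a k|) (M : ℕ) :
    tailMass a M ≤ ∑' k : ℤ, |a k| :=
  (summable_tail ha M).tsum_le_tsum (fun k => by split_ifs <;> simp) ha

lemma summable_mul_exp (ha : Summable fun k => |a k|) (θ : ℝ) :
    Summable fun k : ℤ => (a k : ℂ) * exp (I * (k : ℂ) * (θ : ℂ)) :=
  .of_norm (by simpa [norm_exp_I_mul_intCast_mul] using ha)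

/-- Split at frequency `M`: low frequencies move by at most `M |θ - θ'|`, high ones by at most `2`. -/
lemma norm_intCharFun_sub_le (ha : Summable fun k => |a k|) (M : ℕ) (θ θ' : ℝ) :
    ‖intCharFun a θ - intCharFun a θ'‖
      ≤ M * |θ - θ'| * ∑' k : ℤ, |a k| + 2 * tailMass a M := by
  set b : ℤ → ℝ := fun k =>
    M * |θ - θ'| * |a k| + 2 * (if (M : ℤ) < |k| then |a k| else 0)
  have hb : Summable b := (ha.mul_left _).add ((summable_tail ha M).mul_left 2)
  have hterm : ∀ k : ℤ, ‖(a k : ℂ) * (exp (I * (k : ℂ) * (θ : ℂ))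
      - exp (I * (k : ℂ) * (θ' : ℂ)))‖ ≤ b k := by
    intro k
    rw [norm_mul, norm_real, Real.norm_eq_abs]
    by_cases hk : (M : ℤ) < |k|
    · have := mul_le_mul_of_nonneg_left
        (norm_exp_I_mul_intCast_mul_sub_le_two k θ θ') (abs_nonneg (a k))
      have hlow : 0 ≤ (M : ℝ) * |θ - θ'| * |a k| := by positivity
      simp only [b, if_pos hk]
      linarith
    · have hkM : |(k : ℝ)| ≤ M := by exact_mod_cast not_lt.mp hk
      have := mul_le_mul_of_nonneg_left ((norm_exp_I_mul_intCast_mul_sub_le k θ θ').trans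
        (mul_le_mul_of_nonneg_right hkM (abs_nonneg _))) (abs_nonneg (a k))
      simp only [b, if_neg hk]
      linarith
  have hdiff : intCharFun a θ - intCharFun a θ' = ∑' k : ℤ, (a k : ℂ) *
      (exp (I * (k : ℂ) * (θ : ℂ)) - exp (I * (k : ℂ) * (θ' : ℂ))) := by
    rw [intCharFun, intCharFun, ← (summable_mul_exp ha θ).tsum_sub (summable_mul_exp ha θ')]
    simp only [mul_sub]
  have hnorm := Summable.of_nonneg_of_le (fun k => norm_nonneg _) hterm hb
  calc ‖intCharFun a θ - intCharFun a θ'‖ ≤ ∑' k : ℤ, b k := by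
        rw [hdiff]
        exact (norm_tsum_le_tsum_norm hnorm).trans (hnorm.tsum_le_tsum hterm hb)
    _ = M * |θ - θ'| * ∑' k : ℤ, |a k| + 2 * tailMass a M := by
        rw [(ha.mul_left _).tsum_add ((summable_tail ha M).mul_left 2), tsum_mul_left,
          tsum_mul_left, tailMass]

end IntCharFun

section Family

variable {ι : Type*} {Q : ι → ℤ → ℝ}

lemma exists_forall_tailMass_lt_of_tendsto_iSup (hsum : ∀ i, Summable fun k => |Q i k|)
    {C : ℝ} (hC : ∀ i, ∑' k : ℤ, |Q i k| ≤ C)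
    (htight : Tendsto (fun M : ℕ => ⨆ i, tailMass (Q i) M) atTop (𝓝 0))
    {ε : ℝ} (hε : 0 < ε) : ∃ M : ℕ, ∀ i, tailMass (Q i) M < ε := by
  obtain ⟨M, hM⟩ := (htight.eventually (gt_mem_nhds hε)).exists
  have hbdd : BddAbove (Set.range fun i => tailMass (Q i) M) :=
    ⟨C, by rintro _ ⟨i, rfl⟩; exact (tailMass_le (hsum i) M).trans (hC i)⟩
  exact ⟨M, fun i => (le_ciSup hbdd i).trans_lt hM⟩

lemma uniformEquicontinuous_intCharFun (hsum : ∀ i, Summable fun k => |Q i k|)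
    {C : ℝ} (hC : ∀ i, ∑' k : ℤ, |Q i k| ≤ C)
    (htight : ∀ ε > 0, ∃ M : ℕ, ∀ i, tailMass (Q i) M < ε) :
    UniformEquicontinuous fun i => intCharFun (Q i) := by
  rw [Metric.uniformEquicontinuous_iff]
  intro ε hε
  obtain ⟨M, hM⟩ := htight (ε / 4) (by positivity)
  have hden : (0 : ℝ) < 2 * (M + 1) * (|C| + 1) := by positivity
  refine ⟨ε / (2 * (M + 1) * (|C| + 1)), by positivity, fun θ θ' hθ i => ?_⟩
  rw [Real.dist_eq] at hθ
  have hlow : M * |θ - θ'| * ∑' k : ℤ, |Q i k| ≤ ε / 2 :=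
    calc M * |θ - θ'| * ∑' k : ℤ, |Q i k|
        ≤ (M + 1) * (ε / (2 * (M + 1) * (|C| + 1))) * (|C| + 1) := by
          gcongr
          · linarith
          · exact (hC i).trans ((le_abs_self C).trans (le_add_of_nonneg_right zero_le_one))
      _ = ε / 2 := by field_simp
  rw [dist_eq_norm]
  linarith [norm_intCharFun_sub_le (hsum i) M θ θ', hM i]

end Family

section Roots

variable {X 𝕜 : Type*} [TopologicalSpace X] [NormedDivisionRing 𝕜] {f : X → 𝕜}
  {g : ℕ → X → 𝕜}

lemma isOpen_setOf_eq_zero_of_equicontinuous_roots (hg : Equicontinuous g)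
    (hroot : ∀ n x, g n x ^ (n + 1) = f x) : IsOpen {x | f x = 0} := by
  refine isOpen_iff_mem_nhds.mpr fun x₁ (hx₁ : f x₁ = 0) => ?_
  have hgx₁ : ∀ n, g n x₁ = 0 := fun n =>
    pow_eq_zero_iff n.succ_ne_zero |>.mp ((hroot n x₁).trans hx₁)
  filter_upwards [Metric.equicontinuousAt_iff_right.mp (hg x₁) (1 / 2) (by norm_num)]
    with x hx
  have hpow : ∀ n, ‖f x‖ ≤ (1 / 2 : ℝ) ^ (n + 1) := fun n => by
    have hgn : ‖g n x‖ ≤ 1 / 2 := by simpa [dist_eq_norm, hgx₁] using (hx n).le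
    rw [← hroot n x, norm_pow]
    exact pow_le_pow_left₀ (norm_nonneg _) hgn _
  have hlim : Tendsto (fun n : ℕ => (1 / 2 : ℝ) ^ (n + 1)) atTop (𝓝 0) :=
    (tendsto_pow_atTop_nhds_zero_of_lt_one (by norm_num) (by norm_num)).comp
      (tendsto_add_atTop_nat 1)
  exact norm_le_zero_iff.mp (ge_of_tendsto' hlim hpow)

lemma ne_zero_of_equicontinuous_roots [PreconnectedSpace X] (hg : Equicontinuous g)
    (hroot : ∀ n x, g n x ^ (n + 1) = f x) {x₀ : X} (hx₀ : f x₀ ≠ 0) (x : X) : f x ≠ 0 := by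
  have hf : Continuous f := by
    rw [← funext (hroot 0)]
    simpa using hg.continuous 0
  have hclopen : IsClopen {x | f x = 0} :=
    ⟨isClosed_eq hf continuous_const, isOpen_setOf_eq_zero_of_equicontinuous_roots hg hroot⟩
  rcases isClopen_iff.mp hclopen with hempty | huniv
  · exact fun hx => (Set.eq_empty_iff_forall_notMem.mp hempty x) hx
  · exact absurd (huniv ▸ Set.mem_univ x₀ : x₀ ∈ {x | f x = 0}) hx₀

end Roots

theorem signed_integer_valued_infinitely_divisible_charfun_ne_zero_general
    (p : ℤ → ℝ) (hp1 : (∑' k : ℤ, p k) = 1)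
    (Q : ℕ → ℤ → ℝ)
    (hroot : ∀ n : ℕ, (∑' k : ℤ, Q n k) = 1 ∧ Summable (fun k => |Q n k|) ∧
      ∀ θ : ℝ,
        (∑' k : ℤ, (Q n k : ℂ) * Complex.exp (Complex.I * (k : ℂ) * (θ : ℂ))) ^ (n + 1)
          = ∑' k : ℤ, (p k : ℂ) * Complex.exp (Complex.I * (k : ℂ) * (θ : ℂ)))
    (hbound : ∃ C : ℝ, ∀ n, (∑' k : ℤ, |Q n k|) ≤ C)
    (htight : Filter.Tendsto
      (fun M : ℕ => ⨆ n, ∑' k : ℤ, if (M : ℤ) < |k| then |Q n k| else 0)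
      Filter.atTop (nhds 0)) :
    ∀ θ : ℝ,
      (∑' k : ℤ, (p k : ℂ) * Complex.exp (Complex.I * (k : ℂ) * (θ : ℂ))) ≠ 0 := by
  obtain ⟨C, hC⟩ := hbound
  have hsum : ∀ n, Summable fun k => |Q n k| := fun n => (hroot n).2.1
  have hequi : UniformEquicontinuous fun n => intCharFun (Q n) :=
    uniformEquicontinuous_intCharFun hsum hC
      fun _ hε => exists_forall_tailMass_lt_of_tendsto_iSup hsum hC htight hε
  have hφ₀ : intCharFun p 0 ≠ 0 := by simp [intCharFun_zero, hp1]
  exact ne_zero_of_equicontinuous_roots hequi.equicontinuous (fun n => (hroot n).2.2) hφ₀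

/-- Lemma 3.2: the characteristic function of a signed integer-valued
infinitely divisible distribution (whose family of signed n-th roots
`Q n = q^{(n+1)}` is bounded in variation and uniformly tight) never
vanishes. -/
theorem signed_integer_valued_infinitely_divisible_charfun_ne_zero
    (p : ℤ → ℝ) (hp : ∀ k, 0 ≤ p k) (hp1 : (∑' k : ℤ, p k) = 1)
    (Q : ℕ → ℤ → ℝ)
    (hroot : ∀ n : ℕ, (∑' k : ℤ, Q n k) = 1 ∧ Summable (fun k => |Q n k|) ∧
      ∀ θ : ℝ,
        (∑' k : ℤ, (Q n k : ℂ) * Complex.exp (Complex.I * (k : ℂ) * (θ : ℂ))) ^ (n + 1)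
          = ∑' k : ℤ, (p k : ℂ) * Complex.exp (Complex.I * (k : ℂ) * (θ : ℂ)))
    (hbound : ∃ C : ℝ, ∀ n, (∑' k : ℤ, |Q n k|) ≤ C)
    (htight : Filter.Tendsto
      (fun M : ℕ => ⨆ n, ∑' k : ℤ, if (M : ℤ) < |k| then |Q n k| else 0)
      Filter.atTop (nhds 0)) :
    ∀ θ : ℝ,
      (∑' k : ℤ, (p k : ℂ) * Complex.exp (Complex.I * (k : ℂ) * (θ : ℂ))) ≠ 0 :=
  signed_integer_valued_infinitely_divisible_charfun_ne_zero_general p hp1 Q hroot hbound htight
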